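/- arXiv:2106.10503 — 2 statements merged into one kernel-verified Lean document; each statement's English description precedes it below -/
import Mathlib

section
/- (Theorem 2, first part) Fix a, b > 0, s ∈ (0,1], and ε ∈ (0,1). Define the posterior probability that η < ε given a zero count as P(λ) = s ∫₀^ε e^{-λ u} π_RSB(u; a, b) du / ((1-s) e^{-λ} + s ∫₀^∞ e^{-λ u} π_RSB(u; a, b) du) for λ > 0. Then P is a nondecreasing function of λ on (0, ∞). -/
open MeasureTheory Set Filter

/-- The Beta function `B(a,b) = Γ(a)Γ(b)/Γ(a+b)`. -/
noncomputable def betaFn (a b : ℝ) : ℝ :=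
  Real.Gamma a * Real.Gamma b / Real.Gamma (a + b)

/-- The rescaled beta (RSB) density
`π_RSB(u; a, b) = (1/B(a,b)) (log(1+u))^{a-1} (1+u)^{-1} (1+log(1+u))^{-(a+b)}`. -/
noncomputable def piRSB (a b u : ℝ) : ℝ :=
  (1 / betaFn a b) * (Real.log (1 + u)) ^ (a - 1) * (1 + u)⁻¹ *
    (1 + Real.log (1 + u)) ^ (-(a + b))

/-!
Write `P(λ) = N(λ) / (N(λ) + D(λ))`, where `N(λ) = s ∫_{(0,ε)} e^{-λu} π(u) du` is the mass
below `ε` and `D(λ) = (1-s) e^{-λ} + s ∫_{[ε,∞)} e^{-λu} π(u) du` the mass above it; the atom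
`δ₁` belongs to `D` because `ε < 1`. Raising `λ` from `λ₁` to `λ₂` multiplies the weight at
`u < ε` by at least `e^{-(λ₂-λ₁)ε}` and the weight at `u ≥ ε` by at most that factor, so
`N(λ₁) D(λ₂) ≤ N(λ₂) D(λ₁)` and `P` increases. All integrals converge because
`π(u) ≤ (u^{a-1} + 1) / B(a,b)`.
-/

open Real

noncomputable def laplaceOn (w : ℝ → ℝ) (S : Set ℝ) (lam : ℝ) : ℝ :=
  ∫ u in S, exp (-(lam * u)) * w u

lemma monotoneOn_div_add_of_mul_le {α : Type*} [Preorder α] {N D : α → ℝ} {I : Set α}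
    (hN : ∀ x ∈ I, 0 < N x) (hD : ∀ x ∈ I, 0 ≤ D x)
    (h : ∀ x ∈ I, ∀ y ∈ I, x ≤ y → N x * D y ≤ N y * D x) :
    MonotoneOn (fun x => N x / (N x + D x)) I := by
  intro x hx y hy hxy
  rw [div_le_div_iff₀ (add_pos_of_pos_of_nonneg (hN x hx) (hD x hx))
    (add_pos_of_pos_of_nonneg (hN y hy) (hD y hy))]
  linarith [h x hx y hy hxy]

lemma mul_le_mul_of_le_exp_mul {N₁ N₂ D₁ D₂ c : ℝ} (hN₁ : 0 ≤ N₁) (hD₁ : 0 ≤ D₁)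
    (hN : N₁ ≤ exp c * N₂) (hD : D₂ ≤ exp (-c) * D₁) : N₁ * D₂ ≤ N₂ * D₁ :=
  calc N₁ * D₂ ≤ N₁ * (exp (-c) * D₁) := mul_le_mul_of_nonneg_left hD hN₁
    _ ≤ exp c * N₂ * (exp (-c) * D₁) := mul_le_mul_of_nonneg_right hN (by positivity)
    _ = N₂ * D₁ := by rw [mul_mul_mul_comm, ← exp_add, add_neg_cancel, exp_zero, one_mul]

lemma exp_neg_mul_le_of_le {ε u l₁ l₂ : ℝ} (hu : u ≤ ε) (hl : l₁ ≤ l₂) :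
    exp (-(l₁ * u)) ≤ exp ((l₂ - l₁) * ε) * exp (-(l₂ * u)) := by
  rw [← exp_add, exp_le_exp]
  nlinarith

lemma exp_neg_mul_le_of_ge {ε u l₁ l₂ : ℝ} (hu : ε ≤ u) (hl : l₁ ≤ l₂) :
    exp (-(l₂ * u)) ≤ exp (-((l₂ - l₁) * ε)) * exp (-(l₁ * u)) := by
  rw [← exp_add, exp_le_exp]
  nlinarith

section Laplace

variable {w : ℝ → ℝ} {S : Set ℝ} {ε l₁ l₂ : ℝ}

lemma laplaceOn_nonneg (hS : MeasurableSet S) (hw : ∀ u ∈ S, 0 ≤ w u) (lam : ℝ) :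
    0 ≤ laplaceOn w S lam :=
  setIntegral_nonneg hS fun u hu => mul_nonneg (exp_pos _).le (hw u hu)

lemma laplaceOn_le_exp_mul_of_le (hS : MeasurableSet S) (hw : ∀ u ∈ S, 0 ≤ w u)
    (hSε : ∀ u ∈ S, u ≤ ε) (hl : l₁ ≤ l₂)
    (hint : IntegrableOn (fun u => exp (-(l₂ * u)) * w u) S) :
    laplaceOn w S l₁ ≤ exp ((l₂ - l₁) * ε) * laplaceOn w S l₂ := by
  rw [laplaceOn, laplaceOn, ← integral_const_mul]
  refine integral_mono_of_nonneg ?_ (hint.const_mul _) ?_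
  · filter_upwards [ae_restrict_mem hS] with u hu
    exact mul_nonneg (exp_pos _).le (hw u hu)
  · filter_upwards [ae_restrict_mem hS] with u hu
    rw [← mul_assoc]
    exact mul_le_mul_of_nonneg_right (exp_neg_mul_le_of_le (hSε u hu) hl) (hw u hu)

lemma laplaceOn_le_exp_neg_mul_of_ge (hS : MeasurableSet S) (hw : ∀ u ∈ S, 0 ≤ w u)
    (hSε : ∀ u ∈ S, ε ≤ u) (hl : l₁ ≤ l₂)
    (hint : IntegrableOn (fun u => exp (-(l₁ * u)) * w u) S) :
    laplaceOn w S l₂ ≤ exp (-((l₂ - l₁) * ε)) * laplaceOn w S l₁ := by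
  rw [laplaceOn, laplaceOn, ← integral_const_mul]
  refine integral_mono_of_nonneg ?_ (hint.const_mul _) ?_
  · filter_upwards [ae_restrict_mem hS] with u hu
    exact mul_nonneg (exp_pos _).le (hw u hu)
  · filter_upwards [ae_restrict_mem hS] with u hu
    rw [← mul_assoc]
    exact mul_le_mul_of_nonneg_right (exp_neg_mul_le_of_ge (hSε u hu) hl) (hw u hu)

end Laplace

lemma setIntegral_pos_of_forall_pos {α : Type*} [MeasurableSpace α] {μ : Measure α} {f : α → ℝ}
    {S : Set α} (hS : MeasurableSet S) (hμS : μ S ≠ 0) (hf : ∀ x ∈ S, 0 < f x)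
    (hfi : IntegrableOn f S μ) : 0 < ∫ x in S, f x ∂μ := by
  have hf0 : 0 ≤ᵐ[μ.restrict S] f := by
    filter_upwards [ae_restrict_mem hS] with x hx
    exact (hf x hx).le
  have hsupp : Function.support f ∩ S = S := inter_eq_right.mpr fun x hx => (hf x hx).ne'
  rw [setIntegral_pos_iff_support_of_nonneg_ae hf0 hfi, hsupp]
  exact pos_iff_ne_zero.mpr hμS

lemma setIntegral_Ioi_eq_Ioo_add_Ici {f : ℝ → ℝ} {a ε : ℝ} (hε : a < ε)
    (hf : IntegrableOn f (Ioi a)) :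
    ∫ u in Ioi a, f u = (∫ u in Ioo a ε, f u) + ∫ u in Ici ε, f u := by
  rw [← Ioo_union_Ici_eq_Ioi hε, setIntegral_union
    ((Iio_disjoint_Ici le_rfl).mono_left Ioo_subset_Iio_self) measurableSet_Ici
    (hf.mono_set Ioo_subset_Ioi_self) (hf.mono_set (Ici_subset_Ioi.mpr hε))]

section RSB

variable {a b : ℝ}

lemma betaFn_pos (ha : 0 < a) (hb : 0 < b) : 0 < betaFn a b :=
  div_pos (mul_pos (Gamma_pos_of_pos ha) (Gamma_pos_of_pos hb)) (Gamma_pos_of_pos (by linarith))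

lemma piRSB_pos (ha : 0 < a) (hb : 0 < b) {u : ℝ} (hu : 0 < u) : 0 < piRSB a b u := by
  have hL : 0 < log (1 + u) := log_pos (by linarith)
  unfold piRSB
  have := betaFn_pos ha hb
  positivity

@[fun_prop]
lemma measurable_piRSB (a b : ℝ) : Measurable (piRSB a b) := by
  unfold piRSB
  fun_prop

lemma piRSB_le (ha : 0 < a) (hb : 0 < b) {u : ℝ} (hu : 0 < u) :
    piRSB a b u ≤ (u ^ (a - 1) + 1) / betaFn a b := by
  set L := log (1 + u)
  have hL : 0 < L := log_pos (by linarith)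
  have hdecay : (1 + L) ^ (-(a + b)) ≤ 1 :=
    rpow_le_one_of_one_le_of_nonpos (by linarith) (by linarith)
  have hinv : (1 + u)⁻¹ ≤ 1 := inv_le_one_of_one_le₀ (by linarith)
  have key : L ^ (a - 1) * (1 + u)⁻¹ * (1 + L) ^ (-(a + b)) ≤ u ^ (a - 1) + 1 := by
    rcases le_or_gt 1 a with ha1 | ha1
    · have : L ^ (a - 1) * (1 + L) ^ (-(a + b)) ≤ 1 := calc
        L ^ (a - 1) * (1 + L) ^ (-(a + b)) ≤ (1 + L) ^ (a - 1) * (1 + L) ^ (-(a + b)) := by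
          gcongr; linarith
        _ = (1 + L) ^ (-(1 + b)) := by rw [← rpow_add (by linarith)]; ring_nf
        _ ≤ 1 := rpow_le_one_of_one_le_of_nonpos (by linarith) (by linarith)
      have := rpow_nonneg hu.le (a - 1)
      calc L ^ (a - 1) * (1 + u)⁻¹ * (1 + L) ^ (-(a + b))
          ≤ L ^ (a - 1) * 1 * (1 + L) ^ (-(a + b)) := by gcongr
        _ ≤ u ^ (a - 1) + 1 := by linarith
    · have hLu : u ≤ L * (1 + u) := by
        have := one_sub_inv_le_log_of_pos (show 0 < 1 + u by linarith)
        field_simp at this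
        linarith
      have := rpow_nonneg hu.le (a - 1)
      calc L ^ (a - 1) * (1 + u)⁻¹ * (1 + L) ^ (-(a + b))
          ≤ L ^ (a - 1) * (1 + u) ^ (a - 1) * 1 := by
            gcongr
            rw [← rpow_neg_one]
            exact rpow_le_rpow_of_exponent_le (by linarith) (by linarith)
        _ = (L * (1 + u)) ^ (a - 1) := by rw [mul_one, mul_rpow hL.le (by linarith)]
        _ ≤ u ^ (a - 1) := rpow_le_rpow_of_nonpos hu hLu (by linarith)
        _ ≤ u ^ (a - 1) + 1 := by linarith
  have hB := betaFn_pos ha hb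
  calc piRSB a b u = (L ^ (a - 1) * (1 + u)⁻¹ * (1 + L) ^ (-(a + b))) / betaFn a b := by
        unfold piRSB; ring
    _ ≤ (u ^ (a - 1) + 1) / betaFn a b := by gcongr

lemma integrableOn_exp_neg_mul_piRSB (ha : 0 < a) (hb : 0 < b) {l : ℝ} (hl : 0 < l) :
    IntegrableOn (fun u => exp (-(l * u)) * piRSB a b u) (Ioi 0) := by
  have hdom : IntegrableOn (fun u => (u ^ (a - 1) * exp (-(l * u)) + exp (-(l * u))) / betaFn a b)
      (Ioi 0) := by
    have hpow : IntegrableOn (fun u => u ^ (a - 1) * exp (-(l * u))) (Ioi 0) := by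
      simpa using integrableOn_rpow_mul_exp_neg_mul_rpow (by linarith : -1 < a - 1) one_pos hl
    have hexp : IntegrableOn (fun u => exp (-(l * u))) (Ioi 0) := by
      simpa using exp_neg_integrableOn_Ioi 0 hl
    exact (hpow.add hexp).div_const _
  refine hdom.mono' (by fun_prop : Measurable _).aestronglyMeasurable ?_
  filter_upwards [ae_restrict_mem measurableSet_Ioi] with u (hu : 0 < u)
  rw [norm_of_nonneg (mul_pos (exp_pos _) (piRSB_pos ha hb hu)).le]
  calc exp (-(l * u)) * piRSB a b u ≤ exp (-(l * u)) * ((u ^ (a - 1) + 1) / betaFn a b) :=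
        mul_le_mul_of_nonneg_left (piRSB_le ha hb hu) (exp_pos _).le
    _ = _ := by ring

lemma laplaceOn_piRSB_Ioo_pos (ha : 0 < a) (hb : 0 < b) {ε l : ℝ} (hε : 0 < ε) (hl : 0 < l) :
    0 < laplaceOn (piRSB a b) (Ioo 0 ε) l :=
  setIntegral_pos_of_forall_pos measurableSet_Ioo (by simp [hε])
    (fun u hu => mul_pos (exp_pos _) (piRSB_pos ha hb hu.1))
    ((integrableOn_exp_neg_mul_piRSB ha hb hl).mono_set Ioo_subset_Ioi_self)

end RSB

/-- (Theorem 2, first part) The posterior probability `Pr(η < ε | y = 0)` under the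
RSB mixture `(1-s)δ₁ + s π_RSB(·; a, b)` is a nondecreasing function of the
Poisson rate `λ` on `(0, ∞)`. -/
theorem posterior_zero_prob_monotone (a b s ε : ℝ) (ha : 0 < a) (hb : 0 < b)
    (hs : s ∈ Set.Ioc (0 : ℝ) 1) (hε : ε ∈ Set.Ioo (0 : ℝ) 1) :
    MonotoneOn
      (fun lam : ℝ =>
        s * (∫ u in Set.Ioo (0 : ℝ) ε, Real.exp (-(lam * u)) * piRSB a b u) /
          ((1 - s) * Real.exp (-lam)
            + s * ∫ u in Set.Ioi (0 : ℝ), Real.exp (-(lam * u)) * piRSB a b u))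
      (Set.Ioi 0) := by
  obtain ⟨hs0, hs1⟩ := hs
  obtain ⟨hε0, hε1⟩ := hε
  replace hs1 : 0 ≤ 1 - s := sub_nonneg.mpr hs1
  have hw : ∀ u ∈ Ioi 0, 0 ≤ piRSB a b u := fun u hu => (piRSB_pos ha hb hu).le
  have hint {l : ℝ} (hl : l ∈ Ioi 0) := integrableOn_exp_neg_mul_piRSB ha hb hl
  let N lam := s * laplaceOn (piRSB a b) (Ioo 0 ε) lam
  let D lam := (1 - s) * exp (-lam) + s * laplaceOn (piRSB a b) (Ici ε) lam
  have hN : ∀ l ∈ Ioi 0, 0 < N l := fun l hl => mul_pos hs0 (laplaceOn_piRSB_Ioo_pos ha hb hε0 hl)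
  have hD : ∀ l ∈ Ioi 0, 0 ≤ D l := fun l _ => by
    have := laplaceOn_nonneg measurableSet_Ici (fun u hu => hw u (hε0.trans_le hu)) l
    positivity
  have hcross : ∀ l₁ ∈ Ioi 0, ∀ l₂ ∈ Ioi 0, l₁ ≤ l₂ → N l₁ * D l₂ ≤ N l₂ * D l₁ := by
    intro l₁ hl₁ l₂ hl₂ hl
    have hbelow := laplaceOn_le_exp_mul_of_le (ε := ε) measurableSet_Ioo
      (fun u hu => hw u hu.1) (fun u hu => hu.2.le) hl ((hint hl₂).mono_set Ioo_subset_Ioi_self)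
    have habove := laplaceOn_le_exp_neg_mul_of_ge measurableSet_Ici
      (fun u hu => hw u (hε0.trans_le hu)) (fun u hu => hu) hl
      ((hint hl₁).mono_set (Ici_subset_Ioi.mpr hε0))
    have hatom : exp (-l₂) ≤ exp (-((l₂ - l₁) * ε)) * exp (-l₁) := by
      simpa using exp_neg_mul_le_of_ge (u := 1) hε1.le hl
    refine mul_le_mul_of_le_exp_mul (hN l₁ hl₁).le (hD l₁ hl₁)
      ((mul_le_mul_of_nonneg_left hbelow hs0.le).trans_eq (mul_left_comm _ _ _)) ?_
    calc D l₂ ≤ (1 - s) * (exp (-((l₂ - l₁) * ε)) * exp (-l₁))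
          + s * (exp (-((l₂ - l₁) * ε)) * laplaceOn (piRSB a b) (Ici ε) l₁) :=
        add_le_add (mul_le_mul_of_nonneg_left hatom hs1) (mul_le_mul_of_nonneg_left habove hs0.le)
      _ = exp (-((l₂ - l₁) * ε)) * D l₁ := by ring
  refine (monotoneOn_div_add_of_mul_le hN hD hcross).congr fun l hl => ?_
  simp only [N, D, laplaceOn, setIntegral_Ioi_eq_Ioo_add_Ici hε0 (hint hl)]
  ring
end

section
/- Let a ∈ (0,1], b > 0, and define g(u) = u^{a-1} (1+u)^{-a} (1 + log(1+u))^{-(1+b)} for u > 0. Let π : (0,∞) → (0,∞) be measurable with (1/M) g(u) ≤ π(u) ≤ M g(u) for all u > 0 and some M > 0, and define f_π(y; z) = ∫₀^∞ π(u) · (e^z u)^y e^{-e^z u} / y! du. Then for every integer y ≥ 1 there exists a constant C > 0 such that for all z ∈ ℝ, f_π(y; z) ≤ C / (1 + |z|)^{1+b}. -/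
/-!
Write `c = e^z`. Since `π ≤ M g`, it suffices to bound `∫ g(u) Po(y | cu) du`.
For `z ≥ 0`, `g(u) ≤ u^{a-1}` bounds this by a Gamma integral, equal to `Γ(a+y)/y! · e^{-az}`.
For `z ≤ 0`, split `(0, ∞)` at `e^{-z/2}` and `e^{-z}`. Because
`u g(u) ≤ (1 + log(1+u))^{-(1+b)}`, every `u ≥ e^{-z/2}` gains the factor `(1 - z/2)^{-(1+b)}`;
combined with `Po(y | cu) ≤ cu` below `e^{-z}` and `cu · Po(y | cu) ≤ y + 1` above it, the two
outer pieces are `O((1 - z/2)^{-(1+b)})`, while the first one is at most `e^{z/2}`.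
-/

open MeasureTheory Set Filter

/-- The RSB-type reference density shape with `δ = 0`:
`g(u) = u^{a-1} (1+u)^{-a} (1+log(1+u))^{-(1+b)}`. -/
noncomputable def gShape0 (a b u : ℝ) : ℝ :=
  u ^ (a - 1) * (1 + u) ^ (-a) * (1 + Real.log (1 + u)) ^ (-(1 + b))

/-- The Poisson mixture mass function
`f_π(y; z) = ∫₀^∞ π(u) (e^z u)^y e^{-e^z u} / y! du`. -/
noncomputable def poissonMix (p : ℝ → ℝ) (y : ℕ) (z : ℝ) : ℝ :=
  ∫ u in Set.Ioi (0 : ℝ),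
    p u * ((Real.exp z * u) ^ y * Real.exp (-(Real.exp z * u)) / (Nat.factorial y : ℝ))

open Real

/-- `Po(y | μ)`. -/
noncomputable def poissonWeight (y : ℕ) (μ : ℝ) : ℝ := μ ^ y * exp (-μ) / y.factorial

theorem poissonMix_eq (p : ℝ → ℝ) (y : ℕ) (z : ℝ) :
    poissonMix p y z = ∫ u in Ioi 0, p u * poissonWeight y (exp z * u) := rfl

section PoissonWeight

variable (y : ℕ) {μ : ℝ}

theorem poissonWeight_nonneg (hμ : 0 ≤ μ) : 0 ≤ poissonWeight y μ := by
  unfold poissonWeight; positivity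

theorem poissonWeight_le_self (hy : 1 ≤ y) (hμ₀ : 0 ≤ μ) (hμ₁ : μ ≤ 1) :
    poissonWeight y μ ≤ μ :=
  calc poissonWeight y μ ≤ μ ^ y * exp (-μ) :=
        div_le_self (by positivity) (by exact_mod_cast y.factorial_pos)
    _ ≤ μ ^ y * 1 := by gcongr; exact exp_le_one_iff.mpr (by linarith)
    _ ≤ μ := by rw [mul_one]; exact pow_le_of_le_one hμ₀ hμ₁ (by omega)

theorem poissonWeight_mul_self_le (hμ : 0 ≤ μ) : poissonWeight y μ * μ ≤ y + 1 := by
  have h := pow_div_factorial_le_exp μ hμ (y + 1)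
  rw [Nat.factorial_succ, Nat.cast_mul, div_le_iff₀ (by positivity)] at h
  rw [poissonWeight, div_mul_eq_mul_div, div_le_iff₀ (by positivity), exp_neg,
    mul_right_comm, ← pow_succ, ← div_eq_mul_inv, div_le_iff₀ (exp_pos μ)]
  push_cast at h
  linarith

end PoissonWeight

theorem one_add_rpow_mul_exp_neg_le {r κ t : ℝ} (hκ : 0 < κ) (hκr : κ ≤ r) (ht : 0 ≤ t) :
    (1 + t) ^ r * exp (-(κ * t)) ≤ (r / κ) ^ r := by
  have hr : 0 < r := hκ.trans_le hκr
  have hε : 0 < κ / r := div_pos hκ hr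
  have hbase : 1 + t ≤ r / κ * exp (κ / r * t) := by
    have h1 : κ / r * (1 + t) ≤ κ / r * t + 1 := by
      nlinarith [(div_le_one hr).mpr hκr]
    have h2 := add_one_le_exp (κ / r * t)
    rw [← inv_div, ← div_eq_inv_mul, le_div_iff₀ hε]
    nlinarith
  calc (1 + t) ^ r * exp (-(κ * t))
      ≤ (r / κ * exp (κ / r * t)) ^ r * exp (-(κ * t)) := by gcongr
    _ = (r / κ) ^ r := by
      rw [mul_rpow (by positivity) (exp_pos _).le, ← exp_mul, mul_assoc, ← exp_add]
      field_simp
      simp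

section Shape

variable {a b u : ℝ}

theorem one_le_one_add_log_one_add (hu : 0 ≤ u) : 1 ≤ 1 + log (1 + u) :=
  le_add_of_nonneg_right (log_nonneg (by linarith))

theorem gShape0_nonneg (hu : 0 ≤ u) : 0 ≤ gShape0 a b u := by
  have := one_le_one_add_log_one_add hu
  unfold gShape0
  exact mul_nonneg (mul_nonneg (rpow_nonneg hu _) (rpow_nonneg (by linarith) _))
    (rpow_nonneg (by linarith) _)

theorem one_add_log_one_add_rpow_le_one (hb : 0 ≤ 1 + b) (hu : 0 ≤ u) :
    (1 + log (1 + u)) ^ (-(1 + b)) ≤ 1 :=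
  rpow_le_one_of_one_le_of_nonpos (one_le_one_add_log_one_add hu) (by linarith)

theorem gShape0_le_rpow (ha : 0 ≤ a) (hb : 0 ≤ 1 + b) (hu : 0 < u) :
    gShape0 a b u ≤ u ^ (a - 1) := by
  unfold gShape0
  calc u ^ (a - 1) * (1 + u) ^ (-a) * (1 + log (1 + u)) ^ (-(1 + b))
      ≤ u ^ (a - 1) * 1 * 1 := by
        have h₁ : (1 + u) ^ (-a) ≤ 1 := rpow_le_one_of_one_le_of_nonpos (by linarith) (by linarith)
        have h₂ := one_add_log_one_add_rpow_le_one hb hu.le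
        have := one_le_one_add_log_one_add hu.le
        gcongr
    _ = u ^ (a - 1) := by ring

theorem gShape0_mul_self_le (ha : 0 ≤ a) (hu : 0 < u) :
    gShape0 a b u * u ≤ (1 + log (1 + u)) ^ (-(1 + b)) := by
  have hpow : u ^ (a - 1) * u = u ^ a := by
    rw [← rpow_add_one hu.ne', sub_add_cancel]
  have hcore : u ^ a * (1 + u) ^ (-a) ≤ 1 := by
    rw [rpow_neg (by linarith), ← div_eq_mul_inv]
    exact div_le_one_of_le₀ (rpow_le_rpow hu.le (by linarith) ha) (by positivity)
  calc gShape0 a b u * u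
      = u ^ a * (1 + u) ^ (-a) * (1 + log (1 + u)) ^ (-(1 + b)) := by
        rw [gShape0, ← hpow]; ring
    _ ≤ 1 * (1 + log (1 + u)) ^ (-(1 + b)) := by
        have := one_le_one_add_log_one_add hu.le
        gcongr
    _ = _ := one_mul _

theorem gShape0_mul_self_le_one (ha : 0 ≤ a) (hb : 0 ≤ 1 + b) (hu : 0 < u) :
    gShape0 a b u * u ≤ 1 :=
  (gShape0_mul_self_le ha hu).trans (one_add_log_one_add_rpow_le_one hb hu.le)

theorem gShape0_mul_self_le_of_exp_le {s : ℝ} (ha : 0 ≤ a) (hb : 0 ≤ 1 + b) (hs : 0 ≤ s)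
    (hu : exp s ≤ u) : gShape0 a b u * u ≤ (1 + s) ^ (-(1 + b)) := by
  have hu₀ : 0 < u := (exp_pos s).trans_le hu
  refine (gShape0_mul_self_le ha hu₀).trans (rpow_le_rpow_of_nonpos (by linarith) ?_ (by linarith))
  have : s ≤ log (1 + u) := by
    rw [← log_exp s]; exact log_le_log (exp_pos s) (by linarith)
  linarith

end Shape

theorem setIntegral_le_of_le_of_nonneg {α : Type*} [MeasurableSpace α] {μ : Measure α}
    {s : Set α} {f g : α → ℝ} (hs : MeasurableSet s) (hg : IntegrableOn g s μ)
    (hg₀ : ∀ x ∈ s, 0 ≤ g x) (hfg : ∀ x ∈ s, f x ≤ g x) :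
    ∫ x in s, f x ∂μ ≤ ∫ x in s, g x ∂μ := by
  by_cases hf : IntegrableOn f s μ
  · exact setIntegral_mono_on hf hg hs hfg
  · rw [integral_undef hf]
    exact setIntegral_nonneg hs hg₀

theorem poissonMix_le_mul_poissonMix {p q : ℝ → ℝ} {M : ℝ} {y : ℕ} {z : ℝ} (hM : 0 ≤ M)
    (hpq : ∀ u : ℝ, 0 < u → p u ≤ M * q u) (hq₀ : ∀ u : ℝ, 0 < u → 0 ≤ q u)
    (hq : IntegrableOn (fun u ↦ q u * poissonWeight y (exp z * u)) (Ioi 0)) :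
    poissonMix p y z ≤ M * poissonMix q y z := by
  have hw : ∀ u : ℝ, 0 < u → 0 ≤ poissonWeight y (exp z * u) := fun u hu ↦
    poissonWeight_nonneg y (by positivity)
  rw [poissonMix_eq, poissonMix_eq, ← integral_const_mul]
  refine setIntegral_le_of_le_of_nonneg measurableSet_Ioi (hq.const_mul M)
    (fun u hu ↦ mul_nonneg hM (mul_nonneg (hq₀ u hu) (hw u hu))) fun u hu ↦ ?_
  rw [← mul_assoc]
  exact mul_le_mul_of_nonneg_right (hpq u hu) (hw u hu)

theorem integrableOn_rpow_sub_one_mul_exp_neg_mul {s r : ℝ} (hs : 0 < s) (hr : 0 < r) :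
    IntegrableOn (fun t : ℝ ↦ t ^ (s - 1) * exp (-(r * t))) (Ioi 0) :=
  Integrable.of_integral_ne_zero <| by
    rw [integral_rpow_mul_exp_neg_mul_Ioi hs hr]; positivity

theorem measurable_gShape0_mul_poissonWeight (a b : ℝ) (y : ℕ) (c : ℝ) :
    Measurable fun u ↦ gShape0 a b u * poissonWeight y (c * u) := by
  unfold gShape0 poissonWeight; fun_prop

theorem gShape0_mul_poissonWeight_le_rpow_mul_exp {a b c u : ℝ} (y : ℕ) (ha : 0 ≤ a)
    (hb : 0 ≤ 1 + b) (hc : 0 < c) (hu : 0 < u) :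
    gShape0 a b u * poissonWeight y (c * u) ≤
      c ^ y / y.factorial * (u ^ (a + y - 1) * exp (-(c * u))) := by
  have hpow : u ^ (a - 1) * u ^ y = u ^ (a + y - 1) := by
    rw [← rpow_natCast, ← rpow_add hu]; ring_nf
  calc gShape0 a b u * poissonWeight y (c * u)
      ≤ u ^ (a - 1) * poissonWeight y (c * u) :=
        mul_le_mul_of_nonneg_right (gShape0_le_rpow ha hb hu)
          (poissonWeight_nonneg y (by positivity))
    _ = c ^ y / y.factorial * (u ^ (a + y - 1) * exp (-(c * u))) := by
        rw [poissonWeight, ← hpow, mul_pow]; ring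

theorem integrableOn_gShape0_mul_poissonWeight {a b : ℝ} (ha : 0 < a) (hb : 0 ≤ 1 + b)
    (y : ℕ) (z : ℝ) :
    IntegrableOn (fun u ↦ gShape0 a b u * poissonWeight y (exp z * u)) (Ioi 0) := by
  have hay : 0 < a + y := by positivity
  refine ((integrableOn_rpow_sub_one_mul_exp_neg_mul hay (exp_pos z)).const_mul
    (exp z ^ y / y.factorial)).mono'
    (measurable_gShape0_mul_poissonWeight a b y _).aestronglyMeasurable
    ((ae_restrict_iff' measurableSet_Ioi).mpr (ae_of_all _ fun u hu ↦ ?_))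
  rw [norm_of_nonneg (mul_nonneg (gShape0_nonneg hu.out.le)
    (poissonWeight_nonneg y (by have := hu.out; positivity)))]
  exact gShape0_mul_poissonWeight_le_rpow_mul_exp y ha.le hb (exp_pos z) hu

theorem poissonMix_gShape0_le_exp {a b : ℝ} (ha : 0 < a) (hb : 0 ≤ 1 + b) (y : ℕ) (z : ℝ) :
    poissonMix (gShape0 a b) y z ≤ Gamma (a + y) / y.factorial * exp (-(a * z)) := by
  have hay : 0 < a + y := by positivity
  calc poissonMix (gShape0 a b) y z
      ≤ ∫ u in Ioi 0, exp z ^ y / y.factorial * (u ^ (a + y - 1) * exp (-(exp z * u))) :=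
        setIntegral_mono_on (integrableOn_gShape0_mul_poissonWeight ha hb y z)
          ((integrableOn_rpow_sub_one_mul_exp_neg_mul hay (exp_pos z)).const_mul _)
          measurableSet_Ioi fun u hu ↦
            gShape0_mul_poissonWeight_le_rpow_mul_exp y ha.le hb (exp_pos z) hu
    _ = Gamma (a + y) / y.factorial * (exp (y * z) * exp (-z * (a + y))) := by
        rw [integral_const_mul, integral_rpow_mul_exp_neg_mul_Ioi hay (exp_pos z), one_div,
          ← exp_neg, ← exp_mul, ← exp_nat_mul]
        ring
    _ = Gamma (a + y) / y.factorial * exp (-(a * z)) := by rw [← exp_add]; ring_nf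

theorem integral_Ioi_eq_add_add {f : ℝ → ℝ} {a b c : ℝ} (hf : IntegrableOn f (Ioi a))
    (hab : a ≤ b) (hbc : b ≤ c) :
    ∫ x in Ioi a, f x = (∫ x in Ioc a b, f x) + (∫ x in Ioc b c, f x) + ∫ x in Ioi c, f x := by
  have hac := hab.trans hbc
  rw [← Ioc_union_Ioi_eq_Ioi hac, setIntegral_union (Ioc_disjoint_Ioi le_rfl) measurableSet_Ioi
      (hf.mono_set Ioc_subset_Ioi_self) (hf.mono_set (Ioi_subset_Ioi hac)),
    ← Ioc_union_Ioc_eq_Ioc hab hbc,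
    setIntegral_union (Ioc_disjoint_Ioc_of_le (a := a) (d := c) le_rfl) measurableSet_Ioc
      (hf.mono_set Ioc_subset_Ioi_self)
      (hf.mono_set (Ioc_subset_Ioi_self.trans (Ioi_subset_Ioi hab)))]

section Pieces

variable {a b c u : ℝ} {y : ℕ}

theorem gShape0_mul_poissonWeight_le_mul_self (hy : 1 ≤ y) (hc : 0 < c) (hu : 0 < u)
    (hcu : c * u ≤ 1) : gShape0 a b u * poissonWeight y (c * u) ≤ c * (gShape0 a b u * u) :=
  calc gShape0 a b u * poissonWeight y (c * u) ≤ gShape0 a b u * (c * u) :=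
        mul_le_mul_of_nonneg_left (poissonWeight_le_self y hy (by positivity) hcu)
          (gShape0_nonneg hu.le)
    _ = c * (gShape0 a b u * u) := by ring

theorem gShape0_mul_poissonWeight_le_rpow_neg_two {s : ℝ} (ha : 0 ≤ a) (hb : 0 ≤ 1 + b)
    (hs : 0 ≤ s) (hc : 0 < c) (hu : exp s ≤ u) :
    gShape0 a b u * poissonWeight y (c * u) ≤
      (1 + s) ^ (-(1 + b)) * (y + 1) / c * u ^ (-2 : ℝ) := by
  have hu₀ : 0 < u := (exp_pos s).trans_le hu
  have hsplit : gShape0 a b u * poissonWeight y (c * u) =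
      gShape0 a b u * u * (poissonWeight y (c * u) * (c * u)) / c * u ^ (-2 : ℝ) := by
    rw [rpow_neg hu₀.le, rpow_two]
    field_simp
  rw [hsplit]
  gcongr
  · exact mul_nonneg (poissonWeight_nonneg y (by positivity)) (by positivity)
  · exact gShape0_mul_self_le_of_exp_le ha hb hs hu
  · exact poissonWeight_mul_self_le y (by positivity)

theorem setIntegral_Ioc_gShape0_mul_poissonWeight_le {U V K : ℝ} (hy : 1 ≤ y) (hc : 0 < c)
    (hU : 0 ≤ U) (hUV : U ≤ V) (hcV : c * V ≤ 1) (hK₀ : 0 ≤ K)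
    (hK : ∀ u ∈ Ioc U V, gShape0 a b u * u ≤ K) :
    ∫ u in Ioc U V, gShape0 a b u * poissonWeight y (c * u) ≤ c * (V - U) * K :=
  calc ∫ u in Ioc U V, gShape0 a b u * poissonWeight y (c * u) ≤ ∫ _ in Ioc U V, c * K :=
        setIntegral_le_of_le_of_nonneg measurableSet_Ioc
          (integrableOn_const measure_Ioc_lt_top.ne) (fun _ _ ↦ by positivity) fun u hu ↦
          have hu₀ : 0 < u := hU.trans_lt hu.1
          (gShape0_mul_poissonWeight_le_mul_self hy hc hu₀
            ((mul_le_mul_of_nonneg_left hu.2 hc.le).trans hcV)).trans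
            (mul_le_mul_of_nonneg_left (hK u hu) hc.le)
    _ = c * (V - U) * K := by
        rw [setIntegral_const, volume_real_Ioc_of_le hUV, smul_eq_mul]; ring

theorem setIntegral_Ioi_gShape0_mul_poissonWeight_le {s V : ℝ} (ha : 0 ≤ a) (hb : 0 ≤ 1 + b)
    (hs : 0 ≤ s) (hc : 0 < c) (hV : exp s ≤ V) :
    ∫ u in Ioi V, gShape0 a b u * poissonWeight y (c * u) ≤
      (1 + s) ^ (-(1 + b)) * (y + 1) / (c * V) := by
  have hV₀ : 0 < V := (exp_pos s).trans_le hV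
  have hL₀ : 0 ≤ (1 + s) ^ (-(1 + b)) := rpow_nonneg (by linarith) _
  calc ∫ u in Ioi V, gShape0 a b u * poissonWeight y (c * u)
      ≤ ∫ u in Ioi V, (1 + s) ^ (-(1 + b)) * (y + 1) / c * u ^ (-2 : ℝ) :=
        setIntegral_le_of_le_of_nonneg measurableSet_Ioi
          ((integrableOn_Ioi_rpow_of_lt (by norm_num) hV₀).const_mul _)
          (fun u hu ↦ by have := hV₀.trans hu.out; positivity)
          fun u hu ↦ gShape0_mul_poissonWeight_le_rpow_neg_two ha hb hs hc (hV.trans hu.out.le)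
    _ = (1 + s) ^ (-(1 + b)) * (y + 1) / (c * V) := by
        rw [integral_const_mul, integral_Ioi_rpow_of_lt (by norm_num) hV₀]
        norm_num [rpow_neg_one]
        field_simp

end Pieces

theorem poissonMix_gShape0_le_of_nonpos {a b z : ℝ} {y : ℕ} (ha : 0 < a) (hb : 0 ≤ 1 + b)
    (hy : 1 ≤ y) (hz : z ≤ 0) :
    poissonMix (gShape0 a b) y z ≤ exp (z / 2) + (y + 2) * (1 - z / 2) ^ (-(1 + b)) := by
  have hs : 0 ≤ -z / 2 := by linarith
  have hU : 0 < exp (-z / 2) := exp_pos _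
  have hUV : exp (-z / 2) ≤ exp (-z) := exp_le_exp.mpr (by linarith)
  have hcU : exp z * exp (-z / 2) = exp (z / 2) := by rw [← exp_add]; ring_nf
  have hcV : exp z * exp (-z) = 1 := by rw [← exp_add, add_neg_cancel, exp_zero]
  have hL : (1 + -z / 2) ^ (-(1 + b)) = (1 - z / 2) ^ (-(1 + b)) := by
    rw [neg_div, ← sub_eq_add_neg]
  have hL₀ : 0 ≤ (1 - z / 2) ^ (-(1 + b)) := rpow_nonneg (by linarith) _
  have h₁ := setIntegral_Ioc_gShape0_mul_poissonWeight_le (b := b) hy (exp_pos z) le_rfl hU.le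
    (hcU ▸ exp_le_one_iff.mpr (by linarith)) zero_le_one
    fun u hu ↦ gShape0_mul_self_le_one ha.le hb hu.1
  have h₂ := setIntegral_Ioc_gShape0_mul_poissonWeight_le hy (exp_pos z) hU.le hUV hcV.le hL₀
    fun u hu ↦ hL ▸ gShape0_mul_self_le_of_exp_le ha.le hb hs hu.1.le
  have h₃ := setIntegral_Ioi_gShape0_mul_poissonWeight_le (y := y) ha.le hb hs (exp_pos z) hUV
  rw [hcV, hL, div_one] at h₃
  rw [sub_zero, mul_one, hcU] at h₁
  rw [mul_sub, hcV, hcU] at h₂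
  rw [poissonMix_eq, integral_Ioi_eq_add_add (integrableOn_gShape0_mul_poissonWeight ha hb y z)
    hU.le hUV]
  linarith [mul_nonneg (exp_pos (z / 2)).le hL₀]

section Decay

variable {a b : ℝ} {y : ℕ}

theorem poissonMix_gShape0_mul_rpow_le_of_nonneg {z : ℝ} (ha : 0 < a) (hab : a ≤ 1 + b)
    (hz : 0 ≤ z) :
    poissonMix (gShape0 a b) y z * (1 + |z|) ^ (1 + b) ≤
      Gamma (a + y) / y.factorial * ((1 + b) / a) ^ (1 + b) := by
  have hb : 0 ≤ 1 + b := ha.le.trans hab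
  calc poissonMix (gShape0 a b) y z * (1 + |z|) ^ (1 + b)
      ≤ Gamma (a + y) / y.factorial * exp (-(a * z)) * (1 + z) ^ (1 + b) := by
        rw [abs_of_nonneg hz]
        gcongr
        exact poissonMix_gShape0_le_exp ha hb y z
    _ = Gamma (a + y) / y.factorial * ((1 + z) ^ (1 + b) * exp (-(a * z))) := by ring
    _ ≤ Gamma (a + y) / y.factorial * ((1 + b) / a) ^ (1 + b) := by
        gcongr
        exact one_add_rpow_mul_exp_neg_le ha hab hz

theorem poissonMix_gShape0_mul_rpow_le_of_nonpos {z : ℝ} (ha : 0 < a) (hb : 1 / 2 ≤ 1 + b)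
    (hy : 1 ≤ y) (hz : z ≤ 0) :
    poissonMix (gShape0 a b) y z * (1 + |z|) ^ (1 + b) ≤
      (2 * (1 + b)) ^ (1 + b) + (y + 2) * 2 ^ (1 + b) := by
  have hb₀ : 0 ≤ 1 + b := by linarith
  have hlog : (1 - z / 2) ^ (-(1 + b)) * (1 + -z) ^ (1 + b) ≤ 2 ^ (1 + b) := by
    rw [rpow_neg (by linarith), ← div_eq_inv_mul, ← div_rpow (by linarith) (by linarith)]
    exact rpow_le_rpow (div_nonneg (by linarith) (by linarith))
      ((div_le_iff₀ (by linarith)).mpr (by linarith)) hb₀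
  have hexp : (1 + -z) ^ (1 + b) * exp (z / 2) ≤ (2 * (1 + b)) ^ (1 + b) := by
    have h := one_add_rpow_mul_exp_neg_le (by norm_num : (0 : ℝ) < 1 / 2) hb (neg_nonneg.mpr hz)
    rwa [div_div_eq_mul_div, div_one, mul_comm (1 + b), show -(1 / 2 * -z) = z / 2 by ring] at h
  calc poissonMix (gShape0 a b) y z * (1 + |z|) ^ (1 + b)
      ≤ (exp (z / 2) + (y + 2) * (1 - z / 2) ^ (-(1 + b))) * (1 + -z) ^ (1 + b) := by
        rw [abs_of_nonpos hz]
        exact mul_le_mul_of_nonneg_right (poissonMix_gShape0_le_of_nonpos ha hb₀ hy hz)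
          (rpow_nonneg (by linarith) _)
    _ = (1 + -z) ^ (1 + b) * exp (z / 2) +
          (y + 2) * ((1 - z / 2) ^ (-(1 + b)) * (1 + -z) ^ (1 + b)) := by ring
    _ ≤ (2 * (1 + b)) ^ (1 + b) + (y + 2) * 2 ^ (1 + b) := by gcongr

theorem poissonMix_gShape0_decay (ha : a ∈ Ioc (0 : ℝ) 1) (hb : 0 < b) (hy : 1 ≤ y) :
    ∃ C : ℝ, 0 < C ∧ ∀ z : ℝ, poissonMix (gShape0 a b) y z ≤ C / (1 + |z|) ^ (1 + b) := by
  obtain ⟨ha₀, ha₁⟩ := ha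
  refine ⟨max (Gamma (a + y) / y.factorial * ((1 + b) / a) ^ (1 + b))
    ((2 * (1 + b)) ^ (1 + b) + (y + 2) * 2 ^ (1 + b)), lt_max_of_lt_right (by positivity),
    fun z ↦ ?_⟩
  rw [le_div_iff₀ (by positivity)]
  rcases le_total 0 z with hz | hz
  · exact (poissonMix_gShape0_mul_rpow_le_of_nonneg ha₀ (by linarith) hz).trans (le_max_left _ _)
  · exact (poissonMix_gShape0_mul_rpow_le_of_nonpos ha₀ (by linarith) hy hz).trans
      (le_max_right _ _)

end Decay

theorem poissonMix_decay_bound_general (a b M : ℝ) (ha : a ∈ Set.Ioc (0 : ℝ) 1)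
    (hb : 0 < b) (hM : 0 < M) (p : ℝ → ℝ)
    (hup : ∀ u : ℝ, 0 < u → p u ≤ M * gShape0 a b u) :
    ∀ y : ℕ, 1 ≤ y → ∃ C : ℝ, 0 < C ∧ ∀ z : ℝ,
      poissonMix p y z ≤ C / (1 + |z|) ^ (1 + b) := by
  intro y hy
  obtain ⟨C, hC, hdecay⟩ := poissonMix_gShape0_decay ha hb hy
  refine ⟨M * C, by positivity, fun z ↦ ?_⟩
  calc poissonMix p y z ≤ M * poissonMix (gShape0 a b) y z :=
        poissonMix_le_mul_poissonMix hM.le hup (fun u hu ↦ gShape0_nonneg hu.le)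
          (integrableOn_gShape0_mul_poissonWeight ha.1 (by linarith) y z)
    _ ≤ M * (C / (1 + |z|) ^ (1 + b)) := by gcongr; exact hdecay z
    _ = M * C / (1 + |z|) ^ (1 + b) := (mul_div_assoc _ _ _).symm

/-- If `p` is comparable to the RSB-type shape `gShape0 a b`, then for each fixed
`y ≥ 1` the Poisson mixture mass `f_p(y; z)` decays at least like `(1+|z|)^{-(1+b)}`. -/
theorem poissonMix_decay_bound (a b M : ℝ) (ha : a ∈ Set.Ioc (0 : ℝ) 1)
    (hb : 0 < b) (hM : 0 < M) (p : ℝ → ℝ) (hmeas : Measurable p)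
    (hlow : ∀ u : ℝ, 0 < u → gShape0 a b u / M ≤ p u)
    (hup : ∀ u : ℝ, 0 < u → p u ≤ M * gShape0 a b u) :
    ∀ y : ℕ, 1 ≤ y → ∃ C : ℝ, 0 < C ∧ ∀ z : ℝ,
      poissonMix p y z ≤ C / (1 + |z|) ^ (1 + b) :=
  poissonMix_decay_bound_general a b M ha hb hM p hup
end
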